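/- Generalized Grönwall-type inequality (Lemma A.1): Let T > 0 be fixed, and let x and y be locally integrable real-valued functions on (0,∞) satisfying: liminf_{t→∞} ∫_t^{t+T} x(τ) dτ > 0; limsup_{t→∞} ∫_t^{t+T} x⁻(τ) dτ < ∞; and lim_{t→∞} ∫_t^{t+T} y⁺(τ) dτ = 0, where x⁻ = max{−x, 0} and y⁺ = max{y, 0}. Let ξ be an absolutely continuous nonnegative function on (0,∞), i.e., there exists a locally integrable function g on (0,∞) such that ξ(t) = ξ(t₀) + ∫_{t₀}^{t} g(τ) dτ for all 0 < t₀ ≤ t (so ξ' = g almost everywhere). If for some constant p ∈ (0,1] the differential inequality ξ'(t) + x(t) ξ(t) ≤ y(t) + y(t) ξ(t)^{p} holds for almost every t ∈ (0,∞), then ξ(t) → 0 as t → ∞. -/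

import Mathlib

/-!
Put `h = x - y⁺`. Since `ξ ^ p ≤ 1 + ξ`, the differential inequality gives `ξ' + h ξ ≤ 2 y⁺`
a.e., and the integrating factor `exp ∫ h` (absolutely continuous, as the exponential of a
primitive) turns this into `ξ b ≤ exp (-∫_a^b h) ξ a + exp L ∫_a^b 2 y⁺` whenever `∫_τ^b h ≥ -L`
on `[a, b]`. On late windows of length `T` we have `∫ h ≥ δ - ε`, while the integrals of `h` over
subwindows are `≥ -(M + ε)` and those of `y⁺` are `≤ ε`. So over each window `ξ` contracts by the
factor `exp (-(δ - ε))` up to an error `O(ε)`, whence `limsup ξ = O(ε)` for every small `ε > 0`.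
-/

open MeasureTheory Set Filter Real Topology

theorem LipschitzOnWith.comp_absolutelyContinuousOnInterval {X Y : Type*} [PseudoMetricSpace X]
    [PseudoMetricSpace Y] {f : ℝ → X} {φ : X → Y} {K : NNReal} {s : Set X} {a b : ℝ}
    (hφ : LipschitzOnWith K φ s) (hf : AbsolutelyContinuousOnInterval f a b)
    (hfs : MapsTo f (uIcc a b) s) : AbsolutelyContinuousOnInterval (φ ∘ f) a b := by
  unfold AbsolutelyContinuousOnInterval at hf ⊢
  refine squeeze_zero' (Eventually.of_forall fun E => Finset.sum_nonneg fun _ _ => dist_nonneg)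
    ?_ (by simpa using hf.const_mul (K : ℝ))
  filter_upwards [mem_inf_of_right (mem_principal_self _)] with E hE
  rw [Finset.mul_sum]
  gcongr with i hi
  exact hφ.dist_le_mul _ (hfs (hE.1 i hi).1) _ (hfs (hE.1 i hi).2)

theorem AbsolutelyContinuousOnInterval.exp {f : ℝ → ℝ} {a b : ℝ}
    (hf : AbsolutelyContinuousOnInterval f a b) :
    AbsolutelyContinuousOnInterval (fun t => Real.exp (f t)) a b := by
  obtain ⟨C, hC⟩ := hf.exists_bound
  obtain ⟨K, hK⟩ := (contDiff_exp.contDiffOn (s := Metric.closedBall 0 C)).exists_lipschitzOnWith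
    one_ne_zero (convex_closedBall 0 C) (isCompact_closedBall 0 C)
  exact hK.comp_absolutelyContinuousOnInterval hf fun t ht => mem_closedBall_zero_iff.2 (hC t ht)

theorem mul_exp_integral_le_of_ae_add_mul_le {ξ g h w : ℝ → ℝ} {a b : ℝ} (hab : a ≤ b)
    (hg : IntervalIntegrable g volume a b) (hh : IntervalIntegrable h volume a b)
    (hw : IntervalIntegrable w volume a b)
    (hξ : ∀ t ∈ Icc a b, ξ t = ξ a + ∫ τ in a..t, g τ)
    (hineq : ∀ᵐ t, t ∈ Icc a b → g t + h t * ξ t ≤ w t) :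
    ξ b * exp (∫ τ in a..b, h τ) ≤ ξ a + ∫ τ in a..b, w τ * exp (∫ σ in a..τ, h σ) := by
  set u : ℝ → ℝ := fun t => ξ a + ∫ τ in a..t, g τ
  set E : ℝ → ℝ := fun t => exp (∫ σ in a..t, h σ)
  have hu : AbsolutelyContinuousOnInterval u a b :=
    contDiffOn_const.absolutelyContinuousOnInterval.add
      (hg.absolutelyContinuousOnInterval_intervalIntegral left_mem_uIcc)
  have hE : AbsolutelyContinuousOnInterval E a b :=
    (hh.absolutelyContinuousOnInterval_intervalIntegral left_mem_uIcc).exp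
  have hderiv : ∀ᵐ t ∂volume.restrict (Icc a b), deriv (fun t => u t * E t) t ≤ w t * E t := by
    filter_upwards [ae_restrict_mem measurableSet_Icc, ae_restrict_of_ae hineq,
      ae_restrict_of_ae hg.ae_hasDerivAt_integral, ae_restrict_of_ae hh.ae_hasDerivAt_integral]
      with t ht hineq_t hG hH
    have ht' : t ∈ uIcc a b := uIcc_of_le hab ▸ ht
    have hP : HasDerivAt (fun t => u t * E t) (g t * E t + u t * (E t * h t)) t :=
      ((hG ht' a left_mem_uIcc).const_add (ξ a)).mul (hH ht' a left_mem_uIcc).exp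
    calc deriv (fun t => u t * E t) t = (g t + h t * ξ t) * E t := by
          rw [hP.deriv, show u t = ξ t from (hξ t ht).symm]; ring
      _ ≤ w t * E t := mul_le_mul_of_nonneg_right (hineq_t ht) (exp_pos _).le
  have hint := (hu.fun_mul hE).integral_deriv_eq_sub
  have hmono := intervalIntegral.integral_mono_ae_restrict hab
    (hu.fun_mul hE).intervalIntegrable_deriv (hw.mul_continuousOn hE.continuousOn) hderiv
  simp only [u, E, intervalIntegral.integral_same, exp_zero, add_zero, mul_one] at hint hmono
  rw [← hξ b ⟨hab, le_rfl⟩] at hint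
  linarith

theorem le_exp_neg_integral_mul_add_of_ae_add_mul_le {ξ g h w : ℝ → ℝ} {a b L : ℝ}
    (hab : a ≤ b) (hg : IntervalIntegrable g volume a b) (hh : IntervalIntegrable h volume a b)
    (hw : IntervalIntegrable w volume a b) (hξ : ∀ t ∈ Icc a b, ξ t = ξ a + ∫ τ in a..t, g τ)
    (hineq : ∀ᵐ t, t ∈ Icc a b → g t + h t * ξ t ≤ w t) (hw0 : ∀ t ∈ Icc a b, 0 ≤ w t)
    (hL : ∀ t ∈ Icc a b, -L ≤ ∫ σ in t..b, h σ) :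
    ξ b ≤ exp (-∫ τ in a..b, h τ) * ξ a + exp L * ∫ τ in a..b, w τ := by
  set I := ∫ τ in a..b, h τ
  have hE : ∀ t ∈ Icc a b, exp (∫ σ in a..t, h σ) ≤ exp I * exp L := by
    intro t ht
    have hsplit : (∫ σ in a..t, h σ) + ∫ σ in t..b, h σ = I :=
      intervalIntegral.integral_add_adjacent_intervals
        (hh.mono_set (uIcc_subset_uIcc_left (uIcc_of_le hab ▸ ht)))
        (hh.mono_set (uIcc_subset_uIcc_right (uIcc_of_le hab ▸ ht)))
    rw [← exp_add]
    exact exp_le_exp.2 (by linarith [hL t ht])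
  have hmono : ∫ τ in a..b, w τ * exp (∫ σ in a..τ, h σ) ≤ ∫ τ in a..b, w τ * (exp I * exp L) :=
    intervalIntegral.integral_mono_on hab
      (hw.mul_continuousOn (hh.absolutelyContinuousOnInterval_intervalIntegral
        left_mem_uIcc).exp.continuousOn)
      (hw.mul_const _) fun t ht => mul_le_mul_of_nonneg_left (hE t ht) (hw0 t ht)
  have hkey := mul_exp_integral_le_of_ae_add_mul_le hab hg hh hw hξ hineq
  rw [intervalIntegral.integral_mul_const] at hmono
  have hinv : exp (-I) * exp I = 1 := by rw [← exp_add, neg_add_cancel, exp_zero]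
  calc ξ b = exp (-I) * (ξ b * exp I) := by linear_combination -ξ b * hinv
    _ ≤ exp (-I) * (ξ a + (∫ τ in a..b, w τ) * (exp I * exp L)) := by gcongr; linarith
    _ = exp (-I) * ξ a + exp L * ∫ τ in a..b, w τ := by
        linear_combination ((∫ τ in a..b, w τ) * exp L) * hinv

theorem Real.rpow_le_one_add {r p : ℝ} (hr : 0 ≤ r) (hp0 : 0 ≤ p) (hp1 : p ≤ 1) :
    r ^ p ≤ 1 + r := by
  rcases le_total r 1 with hr1 | hr1
  · linarith [rpow_le_one hr hr1 hp0]
  · linarith [rpow_le_self_of_one_le hr1 hp1]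

theorem add_sub_max_mul_le_two_mul_max {g x y r p : ℝ} (hr : 0 ≤ r) (hp0 : 0 ≤ p) (hp1 : p ≤ 1)
    (h : g + x * r ≤ y + y * r ^ p) : g + (x - max y 0) * r ≤ 2 * max y 0 := by
  have hy : y ≤ max y 0 := le_max_left y 0
  have hyr : y * r ^ p ≤ max y 0 * (1 + r) :=
    calc y * r ^ p ≤ max y 0 * r ^ p := by gcongr
      _ ≤ max y 0 * (1 + r) := by gcongr; exact rpow_le_one_add hr hp0 hp1
  nlinarith

theorem le_exp_neg_integral_mul_add_of_ae_add_mul_le_rpow {x y ξ g : ℝ → ℝ} {a b p L : ℝ}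
    (hab : a ≤ b) (hx : IntegrableOn x (Icc a b)) (hy : IntegrableOn y (Icc a b))
    (hg : IntegrableOn g (Icc a b)) (hξ0 : ∀ t ∈ Icc a b, 0 ≤ ξ t)
    (hξ : ∀ t ∈ Icc a b, ξ t = ξ a + ∫ τ in a..t, g τ) (hp0 : 0 ≤ p) (hp1 : p ≤ 1)
    (hineq : ∀ᵐ t, t ∈ Icc a b → g t + x t * ξ t ≤ y t + y t * ξ t ^ p)
    (hL : ∀ t ∈ Icc a b, -L ≤ ∫ σ in t..b, (x σ - max (y σ) 0)) :
    ξ b ≤ exp (-∫ τ in a..b, (x τ - max (y τ) 0)) * ξ a +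
      exp L * ∫ τ in a..b, 2 * max (y τ) 0 := by
  rw [← uIcc_of_le hab] at hx hy hg
  have hy' : IntegrableOn (fun τ => max (y τ) 0) (uIcc a b) := hy.pos_part
  exact le_exp_neg_integral_mul_add_of_ae_add_mul_le hab hg.intervalIntegrable
    (hx.intervalIntegrable.sub hy'.intervalIntegrable)
    (hy'.intervalIntegrable.const_mul 2) hξ
    (hineq.mono fun t ht ht' => add_sub_max_mul_le_two_mul_max (hξ0 t ht') hp0 hp1 (ht ht'))
    (fun t _ => by positivity) hL

theorem le_pow_mul_add_of_le_mul_add {u : ℝ → ℝ} {s T q c : ℝ} (hq0 : 0 ≤ q) (hq1 : q < 1)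
    (hc : 0 ≤ c) (hT : 0 ≤ T) (hstep : ∀ a, s ≤ a → u (a + T) ≤ q * u a + c) (n : ℕ) :
    u (s + n * T) ≤ q ^ n * u s + c / (1 - q) := by
  induction n with
  | zero => simpa using div_nonneg hc (sub_nonneg.2 hq1.le)
  | succ n ih =>
    have hfix : q * (c / (1 - q)) + c = c / (1 - q) := by
      field_simp [(sub_pos.2 hq1).ne']; ring
    calc u (s + (n + 1 : ℕ) * T) = u (s + n * T + T) := by push_cast; ring_nf
      _ ≤ q * u (s + n * T) + c := hstep _ (le_add_of_nonneg_right (by positivity))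
      _ ≤ q * (q ^ n * u s + c / (1 - q)) + c := by gcongr
      _ = q ^ (n + 1) * u s + c / (1 - q) := by linear_combination hfix

theorem eventually_le_of_le_mul_add {u : ℝ → ℝ} {s T q A c η : ℝ} (hT : 0 < T) (hq0 : 0 ≤ q)
    (hq1 : q < 1) (hA : 0 ≤ A) (hc : 0 ≤ c) (hη : 0 < η)
    (hstep : ∀ a, s ≤ a → u (a + T) ≤ q * u a + c)
    (hwithin : ∀ a b, s ≤ a → a ≤ b → b ≤ a + T → u b ≤ A * u a + c) :
    ∀ᶠ t in atTop, u t ≤ A * (η + c / (1 - q)) + c := by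
  have hdecay : Tendsto (fun n : ℕ => q ^ n * u s) atTop (𝓝 0) := by
    simpa using (tendsto_pow_atTop_nhds_zero_of_lt_one hq0 hq1).mul_const (u s)
  obtain ⟨N, hN⟩ := eventually_atTop.1 (hdecay.eventually (eventually_le_nhds hη))
  filter_upwards [eventually_ge_atTop (s + N * T)] with t ht
  set n := ⌊(t - s) / T⌋₊
  have hnonneg : 0 ≤ (t - s) / T := div_nonneg (by nlinarith [N.cast_nonneg (α := ℝ)]) hT.le
  have hN_le : N ≤ n := Nat.le_floor ((le_div_iff₀ hT).2 (by linarith))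
  have hlow : s + n * T ≤ t := by linarith [(le_div_iff₀ hT).1 (Nat.floor_le hnonneg)]
  have hup : t ≤ s + n * T + T := by
    linarith [(div_lt_iff₀ hT).1 (Nat.lt_floor_add_one ((t - s) / T))]
  calc u t ≤ A * u (s + n * T) + c :=
        hwithin _ _ (le_add_of_nonneg_right (by positivity)) hlow hup
    _ ≤ A * (q ^ n * u s + c / (1 - q)) + c := by
        gcongr; exact le_pow_mul_add_of_le_mul_add hq0 hq1 hc hT.le hstep n
    _ ≤ A * (η + c / (1 - q)) + c := by gcongr; exact hN n hN_le

theorem tendsto_zero_of_eventually_le {α β : Type*} {l : Filter α} {l' : Filter β} [l'.NeBot]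
    {u : α → ℝ} {F : β → ℝ} (hu : ∀ᶠ t in l, 0 ≤ u t) (hF : Tendsto F l' (𝓝 0))
    (hbound : ∀ᶠ ε in l', ∀ᶠ t in l, u t ≤ F ε) : Tendsto u l (𝓝 0) := by
  refine tendsto_order.2 ⟨fun a ha => hu.mono fun t ht => ha.trans_le ht, fun a ha => ?_⟩
  obtain ⟨ε, hFε, hε⟩ := ((hF.eventually (gt_mem_nhds ha)).and hbound).exists
  exact hε.mono fun t ht => ht.trans_lt hFε

theorem eventually_window_bounds {x y : ℝ → ℝ} {T δ M ε : ℝ} (hT : 0 < T)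
    (hx_int : ∀ a b : ℝ, 0 < a → IntegrableOn x (Icc a b))
    (hy_int : ∀ a b : ℝ, 0 < a → IntegrableOn y (Icc a b))
    (hδ : ∀ᶠ t in atTop, δ ≤ ∫ τ in t..(t + T), x τ)
    (hM : ∀ᶠ t in atTop, (∫ τ in t..(t + T), max (-x τ) 0) ≤ M)
    (hε : ∀ᶠ t in atTop, (∫ τ in t..(t + T), max (y τ) 0) ≤ ε) :
    ∀ᶠ a in atTop, δ - ε ≤ (∫ τ in a..(a + T), (x τ - max (y τ) 0)) ∧
      ∀ b ∈ Icc a (a + T), -(M + ε) ≤ (∫ τ in a..b, (x τ - max (y τ) 0)) ∧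
        (∫ τ in a..b, max (y τ) 0) ≤ ε := by
  filter_upwards [hδ, hM, hε, eventually_gt_atTop 0] with a hδa hMa hεa ha
  have hint : ∀ {f : ℝ → ℝ}, IntegrableOn f (Icc a (a + T)) →
      ∀ b ∈ Icc a (a + T), IntervalIntegrable f volume a b := fun hf b hb =>
    (intervalIntegrable_iff_integrableOn_Icc_of_le hb.1).2
      (hf.mono_set (Icc_subset_Icc le_rfl hb.2))
  have hend : a + T ∈ Icc a (a + T) := ⟨by linarith, le_rfl⟩
  have hx := hint (hx_int a (a + T) ha)
  have hxneg : ∀ b ∈ Icc a (a + T), IntervalIntegrable (fun τ => max (-x τ) 0) volume a b :=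
    hint (hx_int a (a + T) ha).neg.pos_part
  have hypos := hint (hy_int a (a + T) ha).pos_part
  have hsub : ∀ {f : ℝ → ℝ}, (∀ τ, 0 ≤ f τ) → IntervalIntegrable f volume a (a + T) →
      ∀ b ∈ Icc a (a + T), (∫ τ in a..b, f τ) ≤ ∫ τ in a..(a + T), f τ := fun hf0 hf b hb =>
    intervalIntegral.integral_mono_interval le_rfl hb.1 hb.2 (ae_of_all _ hf0) hf
  refine ⟨?_, fun b hb => ⟨?_, (hsub (fun τ => le_max_right _ _) (hypos _ hend) b hb).trans hεa⟩⟩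
  · rw [intervalIntegral.integral_sub (hx _ hend) (hypos _ hend)]
    linarith
  · have hxlow : -(∫ τ in a..b, max (-x τ) 0) ≤ ∫ τ in a..b, x τ := by
      rw [← intervalIntegral.integral_neg]
      exact intervalIntegral.integral_mono_on hb.1 (hxneg b hb).neg (hx b hb)
        fun τ _ => neg_le.2 (le_max_left _ _)
    rw [intervalIntegral.integral_sub (hx b hb) (hypos b hb)]
    linarith [hsub (fun τ => le_max_right _ _) (hxneg _ hend) b hb,
      hsub (fun τ => le_max_right _ _) (hypos _ hend) b hb]

theorem eventually_le_of_window_bounds {ξ h w : ℝ → ℝ} {s T δ L ε η : ℝ} (hT : 0 < T)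
    (hδ : 0 < δ) (hε : 0 ≤ ε) (hη : 0 < η) (hξ0 : ∀ t, s ≤ t → 0 ≤ ξ t)
    (hgron : ∀ a b, s ≤ a → a ≤ b → (∀ τ ∈ Icc a b, -L ≤ ∫ σ in τ..b, h σ) →
      ξ b ≤ exp (-∫ τ in a..b, h τ) * ξ a + exp L * ∫ τ in a..b, w τ)
    (hwin : ∀ a, s ≤ a → δ ≤ (∫ τ in a..(a + T), h τ) ∧
      ∀ b ∈ Icc a (a + T), -L ≤ (∫ τ in a..b, h τ) ∧ (∫ τ in a..b, w τ) ≤ ε) :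
    ∀ᶠ t in atTop, ξ t ≤ exp L * (η + exp L * ε / (1 - exp (-δ))) + exp L * ε := by
  have hone : ∀ a b, s ≤ a → a ≤ b → b ≤ a + T →
      ξ b ≤ exp (-∫ τ in a..b, h τ) * ξ a + exp L * ε := by
    intro a b ha hab hb
    refine (hgron a b ha hab fun τ hτ =>
      ((hwin τ (ha.trans hτ.1)).2 b ⟨hτ.2, by linarith [hτ.1]⟩).1).trans ?_
    gcongr
    exact ((hwin a ha).2 b ⟨hab, hb⟩).2
  refine eventually_le_of_le_mul_add (s := s) hT (exp_pos _).le
    (exp_lt_one_iff.2 (neg_neg_of_pos hδ)) (exp_pos _).le (by positivity) hη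
    (fun a ha => ?_) (fun a b ha hab hb => ?_)
  · refine (hone a (a + T) ha (by linarith) le_rfl).trans ?_
    gcongr
    · exact hξ0 a ha
    · exact (hwin a ha).1
  · refine (hone a b ha hab hb).trans ?_
    gcongr
    · exact hξ0 a ha
    · linarith [((hwin a ha).2 b ⟨hab, hb⟩).1]

/-- **Lemma A.1** (Holst–Lunasin–Tsogtgerel): generalized Grönwall-type
inequality.  Here `g` plays the role of `ξ'` (so that `ξ` is absolutely
continuous on `(0,∞)` with derivative `g` a.e.), "`liminf > 0`" is expressed
as "eventually bounded below by some `δ > 0`", and "`limsup < ∞`" as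
"eventually bounded above by some `M`". -/
theorem generalized_gronwall
    (T : ℝ) (hT : 0 < T)
    (x y : ℝ → ℝ)
    -- local integrability on (0,∞)
    (hx_int : ∀ a b : ℝ, 0 < a → IntegrableOn x (Icc a b))
    (hy_int : ∀ a b : ℝ, 0 < a → IntegrableOn y (Icc a b))
    -- liminf_{t→∞} ∫_t^{t+T} x > 0
    (hx1 : ∃ δ : ℝ, 0 < δ ∧ ∀ᶠ t in atTop, δ ≤ ∫ τ in t..(t + T), x τ)
    -- limsup_{t→∞} ∫_t^{t+T} x⁻ < ∞
    (hx2 : ∃ M : ℝ, ∀ᶠ t in atTop, (∫ τ in t..(t + T), max (-x τ) 0) ≤ M)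
    -- lim_{t→∞} ∫_t^{t+T} y⁺ = 0
    (hy : Tendsto (fun t => ∫ τ in t..(t + T), max (y τ) 0) atTop (nhds 0))
    -- ξ absolutely continuous and nonnegative on (0,∞), with ξ' = g a.e.
    (ξ g : ℝ → ℝ)
    (hg_int : ∀ a b : ℝ, 0 < a → IntegrableOn g (Icc a b))
    (hξ_nonneg : ∀ t : ℝ, 0 < t → 0 ≤ ξ t)
    (hξ_ac : ∀ t0 t : ℝ, 0 < t0 → t0 ≤ t → ξ t = ξ t0 + ∫ τ in t0..t, g τ)
    -- the differential inequality ξ' + x ξ ≤ y + y ξ^p a.e. on (0,∞)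
    (p : ℝ) (hp0 : 0 < p) (hp1 : p ≤ 1)
    (hineq : ∀ᵐ t : ℝ, 0 < t → g t + x t * ξ t ≤ y t + y t * ξ t ^ p) :
    Tendsto ξ atTop (nhds 0) := by
  obtain ⟨δ, hδ, hδev⟩ := hx1
  obtain ⟨M, hMev⟩ := hx2
  -- the bound of `eventually_le_of_window_bounds` for `δ - ε`, `L = M + ε`, `2 ε` and `η = ε`
  set F : ℝ → ℝ := fun ε => exp (M + ε) * (ε + exp (M + ε) * (2 * ε) / (1 - exp (-(δ - ε)))) +
    exp (M + ε) * (2 * ε)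
  have hF : Tendsto F (𝓝[>] 0) (𝓝 0) := by
    have hden : 1 - exp (-(δ - 0)) ≠ 0 := (sub_pos.2 (exp_lt_one_iff.2 (by linarith))).ne'
    have : ContinuousAt F 0 := by fun_prop (disch := exact hden)
    simpa [F] using this.tendsto.mono_left nhdsWithin_le_nhds
  refine tendsto_zero_of_eventually_le
    (eventually_atTop.2 ⟨1, fun t ht => hξ_nonneg t (by linarith)⟩) hF ?_
  filter_upwards [Ioo_mem_nhdsGT hδ] with ε hε
  obtain ⟨s, hs⟩ := eventually_atTop.1 ((eventually_window_bounds hT hx_int hy_int hδev hMev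
    (hy.eventually (eventually_le_nhds hε.1))).and (eventually_gt_atTop 0))
  have hpos : ∀ {a}, s ≤ a → 0 < a := fun ha => (hs _ ha).2
  refine eventually_le_of_window_bounds (w := fun τ => 2 * max (y τ) 0) hT (sub_pos.2 hε.2)
    (by linarith [hε.1]) hε.1
    (fun t ht => hξ_nonneg t (hpos ht)) (fun a b ha hab hL => ?_)
    fun a ha => ⟨(hs a ha).1.1, fun b hb => ?_⟩
  · have ha' := hpos ha
    exact le_exp_neg_integral_mul_add_of_ae_add_mul_le_rpow hab (hx_int a b ha')
      (hy_int a b ha') (hg_int a b ha') (fun t ht => hξ_nonneg t (ha'.trans_le ht.1))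
      (fun t ht => hξ_ac a t ha' ht.1) hp0.le hp1
      (hineq.mono fun t ht ht' => ht (ha'.trans_le ht'.1)) hL
  · obtain ⟨hlow, hy_small⟩ := (hs a ha).1.2 b hb
    exact ⟨hlow, by rw [intervalIntegral.integral_const_mul]; linarith⟩
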